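/- Let N ≥ 1, let c₁, …, c_N ∈ (0,1) and t₁, …, t_N ∈ ℝ, and set S_i(x) = c_i x + t_i. Let p = (p₁, …, p_N) and q = (q₁, …, q_N) be probability vectors with each p_i, q_i ∈ (0,1), and let μ_p and μ_q be Borel probability measures on ℝ, supported in [0,1], satisfying μ_p = Σ_{i=1}^N p_i · μ_p ∘ S_i⁻¹ and μ_q = Σ_{i=1}^N q_i · μ_q ∘ S_i⁻¹. Then the first Wasserstein distance satisfies W₁(μ_p, μ_q) ≥ |(Σ_i p_i t_i)(1 − Σ_i q_i c_i) − (Σ_i q_i t_i)(1 − Σ_i p_i c_i)| / ((1 − Σ_i p_i c_i)(1 − Σ_i q_i c_i)). -/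

import Mathlib

open MeasureTheory

/-- The first Wasserstein distance: the infimum over couplings of μ and ν of the
first moment ∫ |x − y| dγ. -/
noncomputable def wasserstein1 (μ ν : Measure ℝ) : ℝ :=
  sInf { a : ℝ | ∃ γ : Measure (ℝ × ℝ), IsProbabilityMeasure γ ∧
    γ.map Prod.fst = μ ∧ γ.map Prod.snd = ν ∧ a = ∫ z : ℝ × ℝ, |z.1 - z.2| ∂γ }

/-! The first moment is 1-Lipschitz for `W₁`, and for a self-similar measure it solves the
fixed-point equation `m = (∑ pᵢ cᵢ) m + ∑ pᵢ tᵢ`. Hence `W₁(μ_p, μ_q) ≥ |m_p - m_q|`, and the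
right-hand side of the theorem is exactly `|m_p - m_q|`. -/

lemma integrable_id_of_measure_compl_Icc_eq_zero {μ : Measure ℝ} [IsFiniteMeasure μ] {a b : ℝ}
    (h : μ (Set.Icc a b)ᶜ = 0) : Integrable (fun x => x) μ := by
  refine .of_bound measurable_id'.aestronglyMeasurable (max |a| |b|) ?_
  filter_upwards [(ae_iff.2 h : ∀ᵐ x ∂μ, x ∈ Set.Icc a b)] with x hx
  exact abs_le_max_abs_abs hx.1 hx.2

lemma integral_id_map_affine {μ : Measure ℝ} [IsProbabilityMeasure μ]
    (hint : Integrable (fun x => x) μ) (a b : ℝ) :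
    ∫ x, x ∂(μ.map fun x => a * x + b) = a * ∫ x, x ∂μ + b := by
  rw [integral_map (by fun_prop) measurable_id'.aestronglyMeasurable,
    integral_add (hint.const_mul a) (integrable_const b), integral_const_mul, integral_const,
    probReal_univ, one_smul]

lemma integral_id_eq_of_selfSimilar {ι : Type*} [Fintype ι] {c t p : ι → ℝ}
    (hp : ∀ i, 0 ≤ p i) {μ : Measure ℝ} [IsProbabilityMeasure μ]
    (hint : Integrable (fun x => x) μ)
    (hss : μ = ∑ i, ENNReal.ofReal (p i) • μ.map fun x => c i * x + t i) :
    ∫ x, x ∂μ = (∑ i, p i * c i) * ∫ x, x ∂μ + ∑ i, p i * t i := by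
  have hint_map (i : ι) : Integrable (fun x => x) (μ.map fun x => c i * x + t i) :=
    (integrable_map_measure measurable_id'.aestronglyMeasurable (by fun_prop)).2
      ((hint.const_mul (c i)).add (integrable_const (t i)))
  calc ∫ x, x ∂μ = ∑ i, p i * ∫ x, x ∂(μ.map fun x => c i * x + t i) := by
        conv_lhs => rw [hss]
        rw [integral_finsetSum_measure fun i _ => (hint_map i).smul_measure ENNReal.ofReal_ne_top]
        simp only [integral_smul_measure, ENNReal.toReal_ofReal (hp _), smul_eq_mul]
    _ = ∑ i, p i * (c i * ∫ x, x ∂μ + t i) := by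
        simp only [integral_id_map_affine hint]
    _ = (∑ i, p i * c i) * ∫ x, x ∂μ + ∑ i, p i * t i := by
        simp only [mul_add, Finset.sum_add_distrib, Finset.sum_mul, mul_assoc]

lemma sum_mul_lt_one {ι : Type*} [Fintype ι] {p c : ι → ℝ} (hp : ∀ i, 0 < p i)
    (hpsum : ∑ i, p i = 1) (hc : ∀ i, c i < 1) : ∑ i, p i * c i < 1 := by
  have hne : (Finset.univ : Finset ι).Nonempty :=
    Finset.nonempty_of_sum_ne_zero (hpsum ▸ one_ne_zero)
  calc ∑ i, p i * c i < ∑ i, p i :=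
        Finset.sum_lt_sum_of_nonempty hne fun i _ => mul_lt_of_lt_one_right (hp i) (hc i)
    _ = 1 := hpsum

lemma abs_integral_id_sub_le_wasserstein1 {μ ν : Measure ℝ} [IsProbabilityMeasure μ]
    [IsProbabilityMeasure ν] (hμ : Integrable (fun x => x) μ) (hν : Integrable (fun x => x) ν) :
    |∫ x, x ∂μ - ∫ x, x ∂ν| ≤ wasserstein1 μ ν := by
  refine le_csInf ⟨_, μ.prod ν, inferInstance, by simp, by simp, rfl⟩ ?_
  rintro _ ⟨γ, hγ, rfl, rfl, rfl⟩
  have h₁ : Integrable Prod.fst γ :=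
    (integrable_map_measure measurable_id'.aestronglyMeasurable measurable_fst.aemeasurable).1 hμ
  have h₂ : Integrable Prod.snd γ :=
    (integrable_map_measure measurable_id'.aestronglyMeasurable measurable_snd.aemeasurable).1 hν
  calc |∫ x, x ∂(γ.map Prod.fst) - ∫ x, x ∂(γ.map Prod.snd)|
        = |∫ z, (z.1 - z.2) ∂γ| := by
          rw [integral_map measurable_fst.aemeasurable measurable_id'.aestronglyMeasurable,
            integral_map measurable_snd.aemeasurable measurable_id'.aestronglyMeasurable,
            integral_sub h₁ h₂]
    _ ≤ ∫ z, |z.1 - z.2| ∂γ := abs_integral_le_integral_abs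

theorem wasserstein1_general_lower_bound_general
    (N : ℕ) (c t : Fin N → ℝ)
    (hc : ∀ i, c i ∈ Set.Ioo (0:ℝ) 1)
    (p q : Fin N → ℝ)
    (hp : ∀ i, p i ∈ Set.Ioo (0:ℝ) 1) (hpsum : ∑ i, p i = 1)
    (hq : ∀ i, q i ∈ Set.Ioo (0:ℝ) 1) (hqsum : ∑ i, q i = 1)
    (μp : Measure ℝ) (hμp : IsProbabilityMeasure μp)
    (hsuppp : μp ((Set.Icc (0:ℝ) 1)ᶜ) = 0)
    (hssp : μp = ∑ i, ENNReal.ofReal (p i) • μp.map (fun x : ℝ => c i * x + t i))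
    (μq : Measure ℝ) (hμq : IsProbabilityMeasure μq)
    (hsuppq : μq ((Set.Icc (0:ℝ) 1)ᶜ) = 0)
    (hssq : μq = ∑ i, ENNReal.ofReal (q i) • μq.map (fun x : ℝ => c i * x + t i)) :
    wasserstein1 μp μq ≥
      |(∑ i, p i * t i) * (1 - ∑ i, q i * c i) - (∑ i, q i * t i) * (1 - ∑ i, p i * c i)|
        / ((1 - ∑ i, p i * c i) * (1 - ∑ i, q i * c i)) := by
  have hintp := integrable_id_of_measure_compl_Icc_eq_zero hsuppp
  have hintq := integrable_id_of_measure_compl_Icc_eq_zero hsuppq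
  have hDp : 0 < 1 - ∑ i, p i * c i :=
    sub_pos.2 (sum_mul_lt_one (fun i => (hp i).1) hpsum fun i => (hc i).2)
  have hDq : 0 < 1 - ∑ i, q i * c i :=
    sub_pos.2 (sum_mul_lt_one (fun i => (hq i).1) hqsum fun i => (hc i).2)
  have hmp : ∫ x, x ∂μp = (∑ i, p i * t i) / (1 - ∑ i, p i * c i) := by
    rw [eq_div_iff hDp.ne']
    linarith [integral_id_eq_of_selfSimilar (fun i => (hp i).1.le) hintp hssp]
  have hmq : ∫ x, x ∂μq = (∑ i, q i * t i) / (1 - ∑ i, q i * c i) := by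
    rw [eq_div_iff hDq.ne']
    linarith [integral_id_eq_of_selfSimilar (fun i => (hq i).1.le) hintq hssq]
  calc _ = |∫ x, x ∂μp - ∫ x, x ∂μq| := by
        rw [hmp, hmq, div_sub_div _ _ hDp.ne' hDq.ne', abs_div, abs_of_pos (mul_pos hDp hDq),
          mul_comm (1 - ∑ i, p i * c i) (∑ i, q i * t i)]
    _ ≤ wasserstein1 μp μq := abs_integral_id_sub_le_wasserstein1 hintp hintq

/-- A lower bound for the first Wasserstein distance between two self-similar
measures for a general IFS of N similitudes on the line with varying contraction
ratios. -/
theorem wasserstein1_general_lower_bound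
    (N : ℕ) (hN : 1 ≤ N) (c t : Fin N → ℝ)
    (hc : ∀ i, c i ∈ Set.Ioo (0:ℝ) 1)
    (p q : Fin N → ℝ)
    (hp : ∀ i, p i ∈ Set.Ioo (0:ℝ) 1) (hpsum : ∑ i, p i = 1)
    (hq : ∀ i, q i ∈ Set.Ioo (0:ℝ) 1) (hqsum : ∑ i, q i = 1)
    (μp : Measure ℝ) (hμp : IsProbabilityMeasure μp)
    (hsuppp : μp ((Set.Icc (0:ℝ) 1)ᶜ) = 0)
    (hssp : μp = ∑ i, ENNReal.ofReal (p i) • μp.map (fun x : ℝ => c i * x + t i))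
    (μq : Measure ℝ) (hμq : IsProbabilityMeasure μq)
    (hsuppq : μq ((Set.Icc (0:ℝ) 1)ᶜ) = 0)
    (hssq : μq = ∑ i, ENNReal.ofReal (q i) • μq.map (fun x : ℝ => c i * x + t i)) :
    wasserstein1 μp μq ≥
      |(∑ i, p i * t i) * (1 - ∑ i, q i * c i) - (∑ i, q i * t i) * (1 - ∑ i, p i * c i)|
        / ((1 - ∑ i, p i * c i) * (1 - ∑ i, q i * c i)) :=
  wasserstein1_general_lower_bound_general N c t hc p q hp hpsum hq hqsum μp hμp hsuppp hssp μq hμq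
    hsuppq hssq
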